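/- Decomposition of an accepting sequence through repeated visits to a fixed element: if (o, o') is in the relation defined by automaton α from state s_0 to final set F in interpretation I, witnessed by a minimal sequence s_0 o_0 s_1 o_1 … s_g o_g with o_0 = o, o_g = o', and e is any domain element, then letting j_1 < … < j_{n-1} be all indices 1 ≤ i < g with o_i = e (and j_0 = 0, j_n = g), the states u_{j_1}, …, u_{j_{n-1}} are pairwise distinct, and the pair (o, e) is in the relation from s_0 to u_{j_1}, (e, e) is in the relation from u_{j_i} to u_{j_{i+1}} for each 1 ≤ i < n−1, and (e, o') is in the relation from u_{j_{n-1}} to u_{j_n} with u_{j_n} ∈ F. -/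

import Mathlib

/-! If a witnessing sequence visits the same state at the same element at positions `i < j`,
splicing `w[..i]` with `w[j+1..]` gives a shorter witnessing sequence with the same first and
last entries. Hence a minimal sequence has no repeated entries, so distinct visits of `e` carry
distinct states; the relations between consecutive visits are witnessed by the segments of the
sequence between them. -/

set_option autoImplicit false

namespace Paper

abbrev CN := ℕ
abbrev RN := ℕ
abbrev Ind := ℕ

structure Interp where
  Dom : Type
  nonempty : Nonempty Dom
  ind : Ind → Dom
  cn : CN → Set Dom
  rn : RN → Dom → Dom → Prop

inductive ERole where
  | name (p : RN)
  | inv (p : RN)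
deriving DecidableEq

def ERole.sem (I : Interp) : ERole → I.Dom → I.Dom → Prop
  | .name p => I.rn p
  | .inv p => fun x y => I.rn p y x

def ERole.einv : ERole → ERole
  | .name p => .inv p
  | .inv p => .name p

inductive Role where
  | er (r : ERole)
  | ctest (A : CN)
  | itest (a : Ind)
deriving DecidableEq

def Role.sem (I : Interp) : Role → I.Dom → I.Dom → Prop
  | .er r => r.sem I
  | .ctest A => fun x y => x = y ∧ x ∈ I.cn A
  | .itest a => fun x y => x = I.ind a ∧ y = I.ind a

inductive NRE where
  | role (σ : Role)
  | comp (E₁ E₂ : NRE)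
  | union (E₁ E₂ : NRE)
  | star (E : NRE)
  | test (E : NRE)

def NRE.sem (I : Interp) : NRE → I.Dom → I.Dom → Prop
  | .role σ => σ.sem I
  | .comp E₁ E₂ => fun x z => ∃ y, E₁.sem I x y ∧ E₂.sem I y z
  | .union E₁ E₂ => fun x y => E₁.sem I x y ∨ E₂.sem I x y
  | .star E => Relation.ReflTransGen (E.sem I)
  | .test E => fun x y => x = y ∧ ∃ z, E.sem I x z

def Role.NoITest : Role → Prop
  | .itest _ => False
  | _ => True

def NRE.NoITest : NRE → Prop
  | .role σ => σ.NoITest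
  | .comp E₁ E₂ => E₁.NoITest ∧ E₂.NoITest
  | .union E₁ E₂ => E₁.NoITest ∧ E₂.NoITest
  | .star E => E.NoITest
  | .test E => E.NoITest

def NRE.NestFree : NRE → Prop
  | .role _ => True
  | .comp E₁ E₂ => E₁.NestFree ∧ E₂.NestFree
  | .union E₁ E₂ => E₁.NestFree ∧ E₂.NestFree
  | .star E => E.NestFree
  | .test _ => False

structure NNFA where
  n : ℕ
  St : Fin n → Type
  init : ∀ i, St i
  final : ∀ i, Set (St i)
  transRole : ∀ i, St i → Role → St i → Prop
  transTest : ∀ i, St i → Fin n → St i → Prop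
  test_gt : ∀ i s j s', transTest i s j s' → i < j

inductive NNFA.Accept (M : NNFA) (I : Interp) :
    ∀ i : Fin M.n, M.St i → Set (M.St i) → I.Dom → I.Dom → Prop where
  | refl {i : Fin M.n} {s : M.St i} {F : Set (M.St i)} {o : I.Dom} :
      s ∈ F → NNFA.Accept M I i s F o o
  | step {i : Fin M.n} {s s' : M.St i} {F : Set (M.St i)} {σ : Role} {o o' o'' : I.Dom} :
      M.transRole i s σ s' → σ.sem I o o' → NNFA.Accept M I i s' F o' o'' →
      NNFA.Accept M I i s F o o''
  | test {i : Fin M.n} {s s' : M.St i} {F : Set (M.St i)} {j : Fin M.n} {o o₁ o'' : I.Dom} :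
      M.transTest i s j s' → NNFA.Accept M I j (M.init j) (M.final j) o o₁ →
      NNFA.Accept M I i s' F o o'' → NNFA.Accept M I i s F o o''

def NNFA.NoITest (M : NNFA) : Prop :=
  ∀ i (s : M.St i) (a : Ind) (s' : M.St i), ¬ M.transRole i s (.itest a) s'

inductive RTree (L : Type) where
  | leaf (l : L)
  | one (l : L) (c : RTree L)
  | two (l : L) (c₁ c₂ : RTree L)

def RTree.label {L : Type} : RTree L → L
  | .leaf l => l
  | .one l _ => l
  | .two l _ _ => l

def RTree.leaves {L : Type} : RTree L → List L
  | .leaf l => [l]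
  | .one _ c => c.leaves
  | .two _ c₁ c₂ => c₁.leaves ++ c₂.leaves

def NNFA.IsRun (M : NNFA) (I : Interp) : RTree ((Σ i, M.St i) × I.Dom) → Prop
  | .leaf _ => True
  | .one l c => M.IsRun I c ∧
      ∃ (σ : Role) (s' : M.St l.1.1) (o' : I.Dom),
        M.transRole l.1.1 l.1.2 σ s' ∧ σ.sem I l.2 o' ∧ c.label = (⟨l.1.1, s'⟩, o')
  | .two l c₁ c₂ => M.IsRun I c₁ ∧ M.IsRun I c₂ ∧
      ∃ (j : Fin M.n) (s' : M.St l.1.1),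
        M.transTest l.1.1 l.1.2 j s' ∧ c₁.label = (⟨l.1.1, s'⟩, l.2) ∧
        c₂.label = (⟨j, M.init j⟩, l.2)

def NNFA.FullRun (M : NNFA) (I : Interp) (i : Fin M.n) (o₁ : I.Dom) (s₁ : M.St i)
    (o₂ : I.Dom) (s₂ : M.St i) (t : RTree ((Σ j, M.St j) × I.Dom)) : Prop :=
  M.IsRun I t ∧ t.label = (⟨i, s₁⟩, o₁) ∧ ((⟨i, s₂⟩ : Σ j, M.St j), o₂) ∈ t.leaves ∧
  ∀ l ∈ t.leaves, l ≠ ((⟨i, s₂⟩ : Σ j, M.St j), o₂) → l.1.2 ∈ M.final l.1.1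

end Paper
namespace Paper

/-- A plain NFA with transitions labeled by roles/tests. -/
structure NFA1 where
  St : Type
  trans : St → Role → St → Prop

/-- A witnessing sequence (trace) s₀o₀s₁o₁… for an NFA over an interpretation. -/
def IsTrace (α : NFA1) (I : Interp) (w : List (α.St × I.Dom)) : Prop :=
  w ≠ [] ∧ List.Chain' (fun x y => ∃ σ, α.trans x.1 σ y.1 ∧ σ.sem I x.2 y.2) w

/-- The relation defined by the NFA from state u to state u'. -/
def NFARel (α : NFA1) (I : Interp) (u u' : α.St) (x y : I.Dom) : Prop :=
  ∃ w, IsTrace α I w ∧ w.head? = some (u, x) ∧ w.getLast? = some (u', y)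

/-- The positions of the sequence considered in the decomposition: position 0,
the last position, and the interior positions where the element e is visited. -/
def visitIdx (α : NFA1) (I : Interp) (w : List (α.St × I.Dom)) (e : I.Dom) :
    Set ℕ :=
  {i | i = 0 ∨ i = w.length - 1 ∨
    (0 < i ∧ i < w.length - 1 ∧ ∃ s, w[i]? = some (s, e))}

namespace IsTrace

variable {α : NFA1} {I : Interp} {w : List (α.St × I.Dom)}

theorem nfaRel_of_getElem? (hw : IsTrace α I w) {i j : ℕ} (hij : i ≤ j)
    {s₁ s₂ : α.St} {x₁ x₂ : I.Dom} (h₁ : w[i]? = some (s₁, x₁)) (h₂ : w[j]? = some (s₂, x₂)) :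
    NFARel α I s₁ s₂ x₁ x₂ := by
  have hj : j < w.length := (List.getElem?_eq_some_iff.mp h₂).1
  have hlen : ((w.drop i).take (j - i + 1)).length = j - i + 1 := by simp; omega
  refine ⟨(w.drop i).take (j - i + 1), ?_, ?_, ?_⟩
  · exact ⟨List.ne_nil_of_length_pos (by omega),
      hw.2.infix ((List.take_prefix _ _).isInfix.trans (List.drop_suffix i w).isInfix)⟩
  · rw [List.head?_eq_getElem?, List.getElem?_take_of_lt (by omega), List.getElem?_drop]
    simpa using h₁
  · rw [List.getLast?_eq_getElem?, hlen, List.getElem?_take_of_lt (by omega),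
      List.getElem?_drop, show i + (j - i + 1 - 1) = j by omega, h₂]

theorem splice (hw : IsTrace α I w) {i j : ℕ} (hij : i < j) (hj : j < w.length)
    (heq : w[i]? = w[j]?) :
    IsTrace α I (w.take (i + 1) ++ w.drop (j + 1)) ∧
      (w.take (i + 1) ++ w.drop (j + 1)).head? = w.head? ∧
      (w.take (i + 1) ++ w.drop (j + 1)).getLast? = w.getLast? ∧
      (w.take (i + 1) ++ w.drop (j + 1)).length < w.length := by
  have hi : i < w.length := by omega
  have hlast_take : (w.take (i + 1)).getLast? = w[j]? := by
    rw [List.getLast?_take, if_neg (by omega), Nat.add_sub_cancel, List.getElem?_eq_getElem hi,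
      Option.some_or, ← List.getElem?_eq_getElem hi, heq]
  refine ⟨⟨List.ne_nil_of_length_pos (by simp; omega), ?_⟩, ?_, ?_, by simp; omega⟩
  · refine (hw.2.infix (List.take_prefix _ _).isInfix).append
      (hw.2.infix (List.drop_suffix _ _).isInfix) fun x hx y hy => ?_
    rw [hlast_take, List.getElem?_eq_getElem hj, Option.mem_def, Option.some_inj] at hx
    rw [List.head?_drop, Option.mem_def, List.getElem?_eq_some_iff] at hy
    obtain ⟨hj', rfl⟩ := hy
    subst hx
    exact List.isChain_iff_getElem.mp hw.2 j hj'
  · rw [List.head?_append_of_ne_nil _ (List.ne_nil_of_length_pos (by simp; omega)),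
      List.head?_take, if_neg (by omega)]
  · rcases Nat.lt_or_ge (j + 1) w.length with hj' | hj'
    · rw [List.getLast?_append_of_ne_nil _ (by simp; omega), List.getLast?_drop, if_neg (by omega)]
    · rw [List.drop_eq_nil_of_le hj', List.append_nil, hlast_take, List.getLast?_eq_getElem?,
        show w.length - 1 = j by omega]

theorem nodup_of_minimal (hw : IsTrace α I w)
    (hmin : ∀ w', IsTrace α I w' → w'.head? = w.head? → w'.getLast? = w.getLast? →
      w.length ≤ w'.length) :
    w.Nodup := by
  refine List.nodup_iff_getElem?_ne_getElem?.mpr fun i j hij hj heq => ?_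
  obtain ⟨htrace, hhead, hlast, hshorter⟩ := hw.splice hij hj heq
  exact (hmin _ htrace hhead hlast).not_gt hshorter

end IsTrace

/-- decomposition of a minimal accepting sequence through the
repeated visits to a fixed element e: the states at the interior visits of e are
pairwise distinct, and between any two consecutive considered positions the
corresponding relation of the automaton holds. -/
theorem minimal_trace_decomposition (α : NFA1) (I : Interp) (F : Set α.St)
    (s₀ : α.St) (o o' : I.Dom) (w : List (α.St × I.Dom)) (hw : IsTrace α I w)
    (hhead : w.head? = some (s₀, o))
    (hlast : ∃ sf ∈ F, w.getLast? = some (sf, o'))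
    (hmin : ∀ w', IsTrace α I w' → w'.head? = some (s₀, o) →
      (∃ sf ∈ F, w'.getLast? = some (sf, o')) → w.length ≤ w'.length)
    (e : I.Dom) :
    (∀ i₁ i₂ : ℕ,
      (0 < i₁ ∧ i₁ < w.length - 1) → (0 < i₂ ∧ i₂ < w.length - 1) → i₁ ≠ i₂ →
      ∀ s₁ s₂, w[i₁]? = some (s₁, e) → w[i₂]? = some (s₂, e) → s₁ ≠ s₂) ∧
    (∀ i₁ i₂ : ℕ, i₁ ∈ visitIdx α I w e → i₂ ∈ visitIdx α I w e → i₁ < i₂ →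
      (∀ k ∈ visitIdx α I w e, ¬ (i₁ < k ∧ k < i₂)) →
      ∀ s₁ x₁ s₂ x₂, w[i₁]? = some (s₁, x₁) → w[i₂]? = some (s₂, x₂) →
        NFARel α I s₁ s₂ x₁ x₂) := by
  have hnodup : w.Nodup := by
    refine hw.nodup_of_minimal fun w' hw' hhead' hlast' => hmin w' hw' (hhead' ▸ hhead) ?_
    obtain ⟨sf, hsf, hlast⟩ := hlast
    exact ⟨sf, hsf, hlast' ▸ hlast⟩
  refine ⟨?_, fun i₁ i₂ _ _ hlt _ s₁ x₁ s₂ x₂ h₁ h₂ => hw.nfaRel_of_getElem? hlt.le h₁ h₂⟩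
  rintro i₁ i₂ ⟨-, hi₁⟩ - hne s₁ s₂ h₁ h₂ rfl
  exact hne ((List.getElem?_inj (by omega) hnodup).mp (h₁.trans h₂.symm))

end Paper
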